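/- arXiv:2405.11371 — 6 statements merged into one kernel-verified Lean document; each statement's English description precedes it below -/
import Mathlib

section
/- Let X be a convex subset of a real vector space and ≿ a complete, transitive, continuous relation on X (all upper and lower contour sets closed, where X carries the topology induced from a topological vector space) satisfying betweenness. Then indifference is preserved under mixing: if x ∼ y, then x ∼ λx + (1−λ)y for every λ ∈ (0,1), provided there exists z ∈ X with y ≻ z or z ≻ x. -/
/-!
If `m := l • x + (1 - l) • y` were strictly better than `x ≿ y`, the midpoint `q` of `m` and
`x` would satisfy `m ≻ q ≻ x ≿ y`; but `m` lies strictly between `q` and `y`, so betweenness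
also gives `q ≻ m`. Applied to the reversed relation, which again satisfies betweenness, the
same argument rules out `x ≻ m` when `y ≿ x`; completeness does the rest.
-/

open Set

section

variable {E : Type*} [AddCommGroup E] [Module ℝ E]

def Betweenness (X : Set E) (r : E → E → Prop) : Prop :=
  ∀ x ∈ X, ∀ y ∈ X, ∀ l ∈ Ioo (0:ℝ) 1,
    (r x y ∧ ¬ r y x) →
      ((r x (l • x + (1 - l) • y) ∧ ¬ r (l • x + (1 - l) • y) x) ∧
       (r (l • x + (1 - l) • y) y ∧ ¬ r y (l • x + (1 - l) • y)))

theorem Betweenness.flip {X : Set E} {r : E → E → Prop} (hbet : Betweenness X r) :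
    Betweenness X (flip r) := by
  intro x hx y hy l ⟨hl0, hl1⟩ hxy
  have hmix : (1 - l) • y + (1 - (1 - l)) • x = l • x + (1 - l) • y := by
    rw [sub_sub_cancel, add_comm]
  have h := hbet y hy x hx (1 - l) ⟨by linarith, by linarith⟩ hxy
  rw [hmix] at h
  exact ⟨h.2, h.1⟩

theorem mix_midpoint_eq_mix (x y : E) {l : ℝ} (hl : 1 + l ≠ 0) :
    (2 * l / (1 + l)) • ((1 / 2 : ℝ) • (l • x + (1 - l) • y) + (1 - 1 / 2 : ℝ) • x)
      + (1 - 2 * l / (1 + l)) • y = l • x + (1 - l) • y := by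
  match_scalars <;> field_simp <;> ring

theorem not_mix_strictly_above_left {X : Set E} (hXconv : Convex ℝ X) {r : E → E → Prop}
    (htrans : ∀ x ∈ X, ∀ y ∈ X, ∀ z ∈ X, r x y → r y z → r x z)
    (hbet : Betweenness X r) {x y : E} (hx : x ∈ X) (hy : y ∈ X) (hxy : r x y)
    {l : ℝ} (hl : l ∈ Ioo 0 1) :
    ¬ (r (l • x + (1 - l) • y) x ∧ ¬ r x (l • x + (1 - l) • y)) := by
  obtain ⟨hl0, hl1⟩ := hl
  set m := l • x + (1 - l) • y
  intro hmx
  have hmX : m ∈ X := hXconv hx hy hl0.le (by linarith) (by ring)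
  set q := (1 / 2 : ℝ) • m + (1 - 1 / 2 : ℝ) • x
  have hqX : q ∈ X := hXconv hmX hx (by norm_num) (by norm_num) (by norm_num)
  obtain ⟨⟨-, hqm⟩, hqx, hxq⟩ := hbet m hmX x hx (1 / 2) (by norm_num) hmx
  have hqy : r q y ∧ ¬ r y q :=
    ⟨htrans q hqX x hx y hy hqx hxy, fun h => hxq (htrans x hx y hy q hqX hxy h)⟩
  have hs : 2 * l / (1 + l) ∈ Ioo (0:ℝ) 1 :=
    ⟨by positivity, by rw [div_lt_one (by linarith)]; linarith⟩
  have h := hbet q hqX y hy _ hs hqy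
  rw [mix_midpoint_eq_mix x y (by linarith)] at h
  exact hqm h.1.1

end

theorem indifference_mixing_general
    {E : Type*} [AddCommGroup E] [Module ℝ E]
    (X : Set E) (hXconv : Convex ℝ X)
    (r : E → E → Prop)
    (hcomp : ∀ x ∈ X, ∀ y ∈ X, r x y ∨ r y x)
    (htrans : ∀ x ∈ X, ∀ y ∈ X, ∀ z ∈ X, r x y → r y z → r x z)
    (hbet : ∀ x ∈ X, ∀ y ∈ X, ∀ l ∈ Ioo (0:ℝ) 1,
      (r x y ∧ ¬ r y x) →
        ((r x (l • x + (1 - l) • y) ∧ ¬ r (l • x + (1 - l) • y) x) ∧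
         (r (l • x + (1 - l) • y) y ∧ ¬ r y (l • x + (1 - l) • y)))) :
    ∀ x ∈ X, ∀ y ∈ X, (r x y ∧ r y x) →
      (∃ z ∈ X, (r y z ∧ ¬ r z y) ∨ (r z x ∧ ¬ r x z)) →
      ∀ l ∈ Ioo (0:ℝ) 1,
        r x (l • x + (1 - l) • y) ∧ r (l • x + (1 - l) • y) x := by
  intro x hx y hy ⟨hxy, hyx⟩ _ l hl
  have hmX : l • x + (1 - l) • y ∈ X := hXconv hx hy hl.1.le (by linarith [hl.2]) (by ring)
  have not_above := not_mix_strictly_above_left hXconv htrans hbet hx hy hxy hl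
  have not_below : ¬ (r x (l • x + (1 - l) • y) ∧ ¬ r (l • x + (1 - l) • y) x) :=
    not_mix_strictly_above_left (r := flip r) hXconv
      (fun a ha b hb c hc hab hbc => htrans c hc b hb a ha hbc hab) (Betweenness.flip hbet)
      hx hy hyx hl
  rcases hcomp x hx _ hmX with h | h
  · exact ⟨h, by_contra fun h' => not_below ⟨h, h'⟩⟩
  · exact ⟨by_contra fun h' => not_above ⟨h, h'⟩, h⟩

theorem indifference_mixing
    {E : Type*} [AddCommGroup E] [Module ℝ E] [TopologicalSpace E]
    [IsTopologicalAddGroup E] [ContinuousSMul ℝ E]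
    (X : Set E) (hXconv : Convex ℝ X)
    (r : E → E → Prop)
    (hcomp : ∀ x ∈ X, ∀ y ∈ X, r x y ∨ r y x)
    (htrans : ∀ x ∈ X, ∀ y ∈ X, ∀ z ∈ X, r x y → r y z → r x z)
    (hclosed : ∀ y ∈ X, IsClosed {x ∈ X | r x y} ∧ IsClosed {x ∈ X | r y x})
    (hbet : ∀ x ∈ X, ∀ y ∈ X, ∀ l ∈ Ioo (0:ℝ) 1,
      (r x y ∧ ¬ r y x) →
        ((r x (l • x + (1 - l) • y) ∧ ¬ r (l • x + (1 - l) • y) x) ∧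
         (r (l • x + (1 - l) • y) y ∧ ¬ r y (l • x + (1 - l) • y)))) :
    ∀ x ∈ X, ∀ y ∈ X, (r x y ∧ r y x) →
      (∃ z ∈ X, (r y z ∧ ¬ r z y) ∨ (r z x ∧ ¬ r x z)) →
      ∀ l ∈ Ioo (0:ℝ) 1,
        r x (l • x + (1 - l) • y) ∧ r (l • x + (1 - l) • y) x :=
  indifference_mixing_general X hXconv r hcomp htrans hbet
end

section
/- Let X be a convex set in a real vector space and ≿ a complete transitive relation satisfying betweenness and mixture-indifference. Then for every y ∈ X, both the strict upper contour set {x : x ≻ y} and the weak upper contour set {x : x ≿ y} are convex. -/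
open Set

theorem upper_contour_sets_convex
    {E : Type*} [AddCommGroup E] [Module ℝ E]
    (X : Set E) (hXconv : Convex ℝ X)
    (r : E → E → Prop)
    (hcomp : ∀ x ∈ X, ∀ y ∈ X, r x y ∨ r y x)
    (htrans : ∀ x ∈ X, ∀ y ∈ X, ∀ z ∈ X, r x y → r y z → r x z)
    (hbet : ∀ x ∈ X, ∀ y ∈ X, ∀ l ∈ Ioo (0:ℝ) 1,
      (r x y ∧ ¬ r y x) →
        ((r x (l • x + (1 - l) • y) ∧ ¬ r (l • x + (1 - l) • y) x) ∧
         (r (l • x + (1 - l) • y) y ∧ ¬ r y (l • x + (1 - l) • y))))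
    (hmix : ∀ x ∈ X, ∀ y ∈ X, (r x y ∧ r y x) → ∀ l ∈ Ioo (0:ℝ) 1,
      r x (l • x + (1 - l) • y) ∧ r (l • x + (1 - l) • y) x) :
    ∀ y ∈ X, Convex ℝ {x ∈ X | r x y ∧ ¬ r y x} ∧ Convex ℝ {x ∈ X | r x y} := by
  intro y hy
  -- key facts about a strict interior mixture
  have key : ∀ x₁ ∈ X, ∀ x₂ ∈ X, ∀ a b : ℝ, 0 < a → 0 < b → a + b = 1 →
      r x₁ y → r x₂ y →
      (r (a • x₁ + b • x₂) y ∧ ((¬ r y x₁ ∧ ¬ r y x₂) → ¬ r y (a • x₁ + b • x₂))) := by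
    intro x₁ hx₁ x₂ hx₂ a b ha hb hab h1 h2
    have hzX : a • x₁ + b • x₂ ∈ X := hXconv hx₁ hx₂ ha.le hb.le hab
    have hb' : b = 1 - a := by linarith
    have ha' : a = 1 - b := by linarith
    have haI : a ∈ Ioo (0:ℝ) 1 := ⟨ha, by linarith⟩
    have hbI : b ∈ Ioo (0:ℝ) 1 := ⟨hb, by linarith⟩
    have hcomm : a • x₁ + b • x₂ = b • x₂ + (1 - b) • x₁ := by
      rw [← ha', add_comm]
    rcases hcomp x₁ hx₁ x₂ hx₂ with h12 | h21
    · by_cases h21' : r x₂ x₁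
      · -- indifferent
        have hm := hmix x₁ hx₁ x₂ hx₂ ⟨h12, h21'⟩ a haI
        rw [← hb'] at hm
        refine ⟨htrans _ hzX _ hx₁ _ hy hm.2 h1, ?_⟩
        intro ⟨hn1, _⟩ hyz
        exact hn1 (htrans _ hy _ hzX _ hx₁ hyz hm.2)
      · -- x₁ ≻ x₂
        have hbt := (hbet x₁ hx₁ x₂ hx₂ a haI ⟨h12, h21'⟩).2
        rw [← hb'] at hbt
        refine ⟨htrans _ hzX _ hx₂ _ hy hbt.1 h2, ?_⟩
        intro ⟨_, hn2⟩ hyz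
        exact hn2 (htrans _ hy _ hzX _ hx₂ hyz hbt.1)
    · by_cases h12' : r x₁ x₂
      · have hm := hmix x₁ hx₁ x₂ hx₂ ⟨h12', h21⟩ a haI
        rw [← hb'] at hm
        refine ⟨htrans _ hzX _ hx₁ _ hy hm.2 h1, ?_⟩
        intro ⟨hn1, _⟩ hyz
        exact hn1 (htrans _ hy _ hzX _ hx₁ hyz hm.2)
      · -- x₂ ≻ x₁
        have hbt := (hbet x₂ hx₂ x₁ hx₁ b hbI ⟨h21, h12'⟩).2
        rw [hcomm]
        refine ⟨htrans _ (hcomm ▸ hzX) _ hx₁ _ hy hbt.1 h1, ?_⟩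
        intro ⟨hn1, _⟩ hyz
        exact hn1 (htrans _ hy _ (hcomm ▸ hzX) _ hx₁ hyz hbt.1)
  constructor
  · intro x₁ hx₁ x₂ hx₂ a b ha hb hab
    rcases ha.lt_or_eq with ha' | ha'
    · rcases hb.lt_or_eq with hb' | hb'
      · have hk := key x₁ hx₁.1 x₂ hx₂.1 a b ha' hb' hab hx₁.2.1 hx₂.2.1
        exact ⟨hXconv hx₁.1 hx₂.1 ha hb hab, hk.1, hk.2 ⟨hx₁.2.2, hx₂.2.2⟩⟩
      · have : a = 1 := by linarith
        have hz : a • x₁ + b • x₂ = x₁ := by rw [this, ← hb']; simp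
        rw [hz]; exact hx₁
    · have : b = 1 := by linarith
      have hz : a • x₁ + b • x₂ = x₂ := by rw [this, ← ha']; simp
      rw [hz]; exact hx₂
  · intro x₁ hx₁ x₂ hx₂ a b ha hb hab
    rcases ha.lt_or_eq with ha' | ha'
    · rcases hb.lt_or_eq with hb' | hb'
      · have hk := key x₁ hx₁.1 x₂ hx₂.1 a b ha' hb' hab hx₁.2 hx₂.2
        exact ⟨hXconv hx₁.1 hx₂.1 ha hb hab, hk.1⟩
      · have : a = 1 := by linarith
        have hz : a • x₁ + b • x₂ = x₁ := by rw [this, ← hb']; simp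
        rw [hz]; exact hx₁
    · have : b = 1 := by linarith
      have hz : a • x₁ + b • x₂ = x₂ := by rw [this, ← ha']; simp
      rw [hz]; exact hx₂
end

section
/- Let ≿ be a complete transitive relation on a compact convex subset X of a Hausdorff topological vector space, with closed contour sets, satisfying betweenness, and with maximal element x* and minimal element x_* satisfying x* ≻ x_*. For t ∈ [0,1], set m_t = t x* + (1−t) x_*. Then for every x ∈ X there exists a unique t ∈ [0,1] such that x ∼ m_t. -/
/-!
Along the segment `m t = lineMap x_* x* t`, betweenness makes the preference strictly increasing
in `t`: `m t ≻ x_*`, and for `s < t` the point `m s` lies strictly between `m t` and `x_*`.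
Hence the indifference class of `x` meets the segment at most once. It meets it at least once
because the segment is connected and is covered by the two closed contour sets of `x`, the upper
one containing `x*` and the lower one containing `x_*`.
-/

open Set AffineMap

theorem smul_add_one_sub_smul_eq_lineMap {k V : Type*} [Ring k] [AddCommGroup V] [Module k V]
    (a b : V) (t : k) : t • a + (1 - t) • b = lineMap b a t := by
  rw [lineMap_apply_module, add_comm]

theorem exists_indifferent_of_isPreconnected {α : Type*} [TopologicalSpace α] {X K : Set α}
    {r : α → α → Prop} {x y z : α} (hcomp : ∀ w ∈ X, r w x ∨ r x w)
    (hupper : IsClosed {w ∈ X | r w x}) (hlower : IsClosed {w ∈ X | r x w})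
    (hK : IsPreconnected K) (hKX : K ⊆ X) (hy : y ∈ K) (hyx : r y x) (hz : z ∈ K)
    (hxz : r x z) : ∃ w ∈ K, r x w ∧ r w x := by
  have hcover : K ⊆ {w ∈ X | r w x} ∪ {w ∈ X | r x w} := fun w hw =>
    (hcomp w (hKX hw)).imp (⟨hKX hw, ·⟩) (⟨hKX hw, ·⟩)
  obtain ⟨w, hw, ⟨-, hwx⟩, ⟨-, hxw⟩⟩ := isPreconnected_closed_iff.mp hK _ _ hupper hlower hcover
    ⟨y, hy, hKX hy, hyx⟩ ⟨z, hz, hKX hz, hxz⟩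
  exact ⟨w, hw, hxw, hwx⟩

theorem eq_of_indifferent_of_strictly_increasing {α β : Type*} [LinearOrder β] {X : Set α}
    {r : α → α → Prop} (htrans : ∀ x ∈ X, ∀ y ∈ X, ∀ z ∈ X, r x y → r y z → r x z)
    {S : Set β} {f : β → α} (hfX : MapsTo f S X)
    (hf : ∀ s ∈ S, ∀ t ∈ S, s < t → r (f t) (f s) ∧ ¬ r (f s) (f t))
    {x : α} (hx : x ∈ X) {s t : β} (hs : s ∈ S) (ht : t ∈ S)
    (hxs : r x (f s) ∧ r (f s) x) (hxt : r x (f t) ∧ r (f t) x) : s = t := by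
  rcases lt_trichotomy s t with hst | rfl | hts
  · exact absurd (htrans _ (hfX hs) x hx _ (hfX ht) hxs.2 hxt.1) (hf s hs t ht hst).2
  · rfl
  · exact absurd (htrans _ (hfX ht) x hx _ (hfX hs) hxt.2 hxs.1) (hf t ht s hs hts).2

theorem strictly_increasing_lineMap {E : Type*} [AddCommGroup E] [Module ℝ E] {X : Set E}
    {r : E → E → Prop} (hXconv : Convex ℝ X)
    (hbet : ∀ x ∈ X, ∀ y ∈ X, ∀ l ∈ Ioo (0:ℝ) 1, (r x y ∧ ¬ r y x) →
      ((r x (lineMap y x l) ∧ ¬ r (lineMap y x l) x) ∧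
       (r (lineMap y x l) y ∧ ¬ r y (lineMap y x l))))
    {a b : E} (ha : a ∈ X) (hb : b ∈ X) (hab : r a b ∧ ¬ r b a) :
    ∀ s ∈ Icc (0:ℝ) 1, ∀ t ∈ Icc (0:ℝ) 1, s < t →
      r (lineMap b a t) (lineMap b a s) ∧ ¬ r (lineMap b a s) (lineMap b a t) := by
  rintro s ⟨hs0, -⟩ t ⟨-, ht1⟩ hst
  have ht0 : 0 < t := hs0.trans_lt hst
  have hmt_b : r (lineMap b a t) b ∧ ¬ r b (lineMap b a t) := by
    rcases ht1.eq_or_lt with rfl | ht1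
    · simpa using hab
    · exact (hbet a ha b hb t ⟨ht0, ht1⟩ hab).2
  rcases hs0.eq_or_lt with rfl | hs0
  · simpa using hmt_b
  · have hmt : lineMap b a t ∈ X := hXconv.lineMap_mem hb ha ⟨ht0.le, ht1⟩
    have hbetween := (hbet _ hmt b hb (s / t) ⟨div_pos hs0 ht0, (div_lt_one ht0).2 hst⟩ hmt_b).1
    rwa [lineMap_lineMap_right, div_mul_cancel₀ s ht0.ne'] at hbetween

theorem calibration_exists_unique_general
    {E : Type*} [AddCommGroup E] [Module ℝ E] [TopologicalSpace E]
    [IsTopologicalAddGroup E] [ContinuousSMul ℝ E]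
    (X : Set E) (hXconv : Convex ℝ X)
    (r : E → E → Prop)
    (hcomp : ∀ x ∈ X, ∀ y ∈ X, r x y ∨ r y x)
    (htrans : ∀ x ∈ X, ∀ y ∈ X, ∀ z ∈ X, r x y → r y z → r x z)
    (hclosed : ∀ y ∈ X, IsClosed {x ∈ X | r x y} ∧ IsClosed {x ∈ X | r y x})
    (hbet : ∀ x ∈ X, ∀ y ∈ X, ∀ l ∈ Ioo (0:ℝ) 1,
      (r x y ∧ ¬ r y x) →
        ((r x (l • x + (1 - l) • y) ∧ ¬ r (l • x + (1 - l) • y) x) ∧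
         (r (l • x + (1 - l) • y) y ∧ ¬ r y (l • x + (1 - l) • y))))
    (xstar xlow : E) (hxstar : xstar ∈ X) (hxlow : xlow ∈ X)
    (hbest : ∀ x ∈ X, r xstar x) (hworst : ∀ x ∈ X, r x xlow)
    (hstrict : r xstar xlow ∧ ¬ r xlow xstar) :
    ∀ x ∈ X, ∃! t : ℝ, t ∈ Icc (0:ℝ) 1 ∧
      (r x (t • xstar + (1 - t) • xlow) ∧ r (t • xstar + (1 - t) • xlow) x) := by
  intro x hx
  simp only [smul_add_one_sub_smul_eq_lineMap] at hbet ⊢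
  have hmX : MapsTo (lineMap xlow xstar) (Icc (0:ℝ) 1) X := fun t ht =>
    hXconv.lineMap_mem hxlow hxstar ht
  have hmono := strictly_increasing_lineMap hXconv hbet hxstar hxlow hstrict
  obtain ⟨_, ⟨t, ht, rfl⟩, htx⟩ := exists_indifferent_of_isPreconnected
    (fun w hw => hcomp w hw x hx) (hclosed x hx).1 (hclosed x hx).2
    (isPreconnected_Icc.image _ lineMap_continuous.continuousOn) hmX.image_subset
    (mem_image_of_mem _ (right_mem_Icc.2 zero_le_one)) (by simpa using hbest x hx)
    (mem_image_of_mem _ (left_mem_Icc.2 zero_le_one)) (by simpa using hworst x hx)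
  exact ⟨t, ⟨ht, htx⟩, fun s ⟨hs, hsx⟩ =>
    eq_of_indifferent_of_strictly_increasing htrans hmX hmono hx hs ht hsx htx⟩

theorem calibration_exists_unique
    {E : Type*} [AddCommGroup E] [Module ℝ E] [TopologicalSpace E]
    [IsTopologicalAddGroup E] [ContinuousSMul ℝ E] [T2Space E]
    (X : Set E) (hXconv : Convex ℝ X) (hXcomp : IsCompact X)
    (r : E → E → Prop)
    (hcomp : ∀ x ∈ X, ∀ y ∈ X, r x y ∨ r y x)
    (htrans : ∀ x ∈ X, ∀ y ∈ X, ∀ z ∈ X, r x y → r y z → r x z)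
    (hclosed : ∀ y ∈ X, IsClosed {x ∈ X | r x y} ∧ IsClosed {x ∈ X | r y x})
    (hbet : ∀ x ∈ X, ∀ y ∈ X, ∀ l ∈ Ioo (0:ℝ) 1,
      (r x y ∧ ¬ r y x) →
        ((r x (l • x + (1 - l) • y) ∧ ¬ r (l • x + (1 - l) • y) x) ∧
         (r (l • x + (1 - l) • y) y ∧ ¬ r y (l • x + (1 - l) • y))))
    (xstar xlow : E) (hxstar : xstar ∈ X) (hxlow : xlow ∈ X)
    (hbest : ∀ x ∈ X, r xstar x) (hworst : ∀ x ∈ X, r x xlow)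
    (hstrict : r xstar xlow ∧ ¬ r xlow xstar) :
    ∀ x ∈ X, ∃! t : ℝ, t ∈ Icc (0:ℝ) 1 ∧
      (r x (t • xstar + (1 - t) • xlow) ∧ r (t • xstar + (1 - t) • xlow) x) :=
  calibration_exists_unique_general X hXconv r hcomp htrans hclosed hbet xstar xlow hxstar hxlow
    hbest hworst hstrict
end

section
/- Let ≿ be a complete transitive relation on a compact convex X satisfying continuity and betweenness, with best and worst elements x* ≻ x_*. Define U : X → [0,1] by the unique t with x ∼ m_t where m_t = t x* + (1−t) x_*. Then U represents ≿: x ≿ y if and only if U(x) ≥ U(y). -/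
/-!
Betweenness applied to `x* ≻ x_*`, and then to `m_s ≻ x_*` for a point `m_s` of the segment, shows
that `t ↦ m_t = t • x* + (1 - t) • x_*` is strictly increasing for the preference. Since every `x`
is indifferent to `m_{U x}`, transitivity transports comparisons of `x` and `y` to comparisons of
`m_{U x}` and `m_{U y}`, i.e. of `U x` and `U y`.
-/

open Set

section Calibration

variable {E : Type*} [AddCommGroup E] [Module ℝ E]

variable {X : Set E} {r : E → E → Prop} {a b : E}

lemma smul_div_smul_add_smul_eq (a b : E) {s : ℝ} (t : ℝ) (hs : s ≠ 0) :
    (t / s) • (s • a + (1 - s) • b) + (1 - t / s) • b = t • a + (1 - t) • b := by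
  match_scalars
  · field_simp
  · field_simp
    ring

lemma strictPref_combo_right
    (hbet : Betweenness X r)
    (ha : a ∈ X) (hb : b ∈ X) (hab : r a b ∧ ¬ r b a) {s : ℝ} (hs : s ∈ Ioc 0 1) :
    r (s • a + (1 - s) • b) b ∧ ¬ r b (s • a + (1 - s) • b) := by
  rcases hs.2.eq_or_lt with rfl | hs1
  · simpa using hab
  · exact (hbet a ha b hb s ⟨hs.1, hs1⟩ hab).2

lemma strictPref_combo_of_lt (hX : Convex ℝ X)
    (hbet : Betweenness X r)
    (ha : a ∈ X) (hb : b ∈ X) (hab : r a b ∧ ¬ r b a)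
    {s t : ℝ} (ht : 0 ≤ t) (hts : t < s) (hs : s ≤ 1) :
    r (s • a + (1 - s) • b) (t • a + (1 - t) • b) ∧
      ¬ r (t • a + (1 - t) • b) (s • a + (1 - s) • b) := by
  have hs0 : 0 < s := ht.trans_lt hts
  have hsb := strictPref_combo_right hbet ha hb hab ⟨hs0, hs⟩
  rcases ht.eq_or_lt with rfl | ht0
  · simpa using hsb
  · have hsX : s • a + (1 - s) • b ∈ X := hX ha hb hs0.le (sub_nonneg.2 hs) (by ring)
    have key := (hbet _ hsX b hb (t / s) ⟨div_pos ht0 hs0, (div_lt_one hs0).2 hts⟩ hsb).1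
    rwa [smul_div_smul_add_smul_eq a b t hs0.ne'] at key

end Calibration

lemma rel_iff_le_of_calibration {E α : Type*} [LinearOrder α] {X : Set E} {r : E → E → Prop}
    (htrans : ∀ x ∈ X, ∀ y ∈ X, ∀ z ∈ X, r x y → r y z → r x z)
    {I : Set α} {m : α → E} (hmX : MapsTo m I X)
    (hm : ∀ s ∈ I, ∀ t ∈ I, t < s → r (m s) (m t) ∧ ¬ r (m t) (m s))
    {U : E → α} (hU : ∀ x ∈ X, U x ∈ I ∧ r x (m (U x)) ∧ r (m (U x)) x)
    {x y : E} (hx : x ∈ X) (hy : y ∈ X) :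
    r x y ↔ U y ≤ U x := by
  obtain ⟨hUx, hx_m, hm_x⟩ := hU x hx
  obtain ⟨hUy, hy_m, hm_y⟩ := hU y hy
  constructor
  · intro hxy
    by_contra! hlt
    have hm_xy : r (m (U x)) y := htrans _ (hmX hUx) _ hx _ hy hm_x hxy
    exact (hm _ hUy _ hUx hlt).2 (htrans _ (hmX hUx) _ hy _ (hmX hUy) hm_xy hy_m)
  · intro hle
    rcases hle.eq_or_lt with heq | hlt
    · exact htrans _ hx _ (hmX hUy) _ hy (heq ▸ hx_m) hm_y
    · have hx_my : r x (m (U y)) :=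
        htrans _ hx _ (hmX hUx) _ (hmX hUy) hx_m (hm _ hUx _ hUy hlt).1
      exact htrans _ hx _ (hmX hUy) _ hy hx_my hm_y

theorem calibration_represents_general
    {E : Type*} [AddCommGroup E] [Module ℝ E]
    (X : Set E) (hXconv : Convex ℝ X)
    (r : E → E → Prop)
    (htrans : ∀ x ∈ X, ∀ y ∈ X, ∀ z ∈ X, r x y → r y z → r x z)
    (hbet : ∀ x ∈ X, ∀ y ∈ X, ∀ l ∈ Ioo (0:ℝ) 1,
      (r x y ∧ ¬ r y x) →
        ((r x (l • x + (1 - l) • y) ∧ ¬ r (l • x + (1 - l) • y) x) ∧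
         (r (l • x + (1 - l) • y) y ∧ ¬ r y (l • x + (1 - l) • y))))
    (xstar xlow : E) (hxstar : xstar ∈ X) (hxlow : xlow ∈ X)
    (hstrict : r xstar xlow ∧ ¬ r xlow xstar)
    (U : E → ℝ)
    (hU : ∀ x ∈ X, U x ∈ Icc (0:ℝ) 1 ∧
      (r x (U x • xstar + (1 - U x) • xlow) ∧ r (U x • xstar + (1 - U x) • xlow) x)) :
    ∀ x ∈ X, ∀ y ∈ X, (r x y ↔ U x ≥ U y) := by
  have hmX : MapsTo (fun t : ℝ => t • xstar + (1 - t) • xlow) (Icc 0 1) X :=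
    fun t ht => hXconv hxstar hxlow ht.1 (sub_nonneg.2 ht.2) (by ring)
  have hmono : ∀ s ∈ Icc (0:ℝ) 1, ∀ t ∈ Icc (0:ℝ) 1, t < s →
      r (s • xstar + (1 - s) • xlow) (t • xstar + (1 - t) • xlow) ∧
        ¬ r (t • xstar + (1 - t) • xlow) (s • xstar + (1 - s) • xlow) :=
    fun s hs t ht hts => strictPref_combo_of_lt hXconv hbet hxstar hxlow hstrict ht.1 hts hs.2
  intro x hx y hy
  exact rel_iff_le_of_calibration htrans hmX hmono hU hx hy

theorem calibration_represents
    {E : Type*} [AddCommGroup E] [Module ℝ E] [TopologicalSpace E]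
    [IsTopologicalAddGroup E] [ContinuousSMul ℝ E] [T2Space E]
    (X : Set E) (hXconv : Convex ℝ X) (hXcomp : IsCompact X)
    (r : E → E → Prop)
    (hcomp : ∀ x ∈ X, ∀ y ∈ X, r x y ∨ r y x)
    (htrans : ∀ x ∈ X, ∀ y ∈ X, ∀ z ∈ X, r x y → r y z → r x z)
    (hclosed : ∀ y ∈ X, IsClosed {x ∈ X | r x y} ∧ IsClosed {x ∈ X | r y x})
    (hbet : ∀ x ∈ X, ∀ y ∈ X, ∀ l ∈ Ioo (0:ℝ) 1,
      (r x y ∧ ¬ r y x) →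
        ((r x (l • x + (1 - l) • y) ∧ ¬ r (l • x + (1 - l) • y) x) ∧
         (r (l • x + (1 - l) • y) y ∧ ¬ r y (l • x + (1 - l) • y))))
    (xstar xlow : E) (hxstar : xstar ∈ X) (hxlow : xlow ∈ X)
    (hbest : ∀ x ∈ X, r xstar x) (hworst : ∀ x ∈ X, r x xlow)
    (hstrict : r xstar xlow ∧ ¬ r xlow xstar)
    (U : E → ℝ)
    (hU : ∀ x ∈ X, U x ∈ Icc (0:ℝ) 1 ∧
      (r x (U x • xstar + (1 - U x) • xlow) ∧ r (U x • xstar + (1 - U x) • xlow) x)) :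
    ∀ x ∈ X, ∀ y ∈ X, (r x y ↔ U x ≥ U y) :=
  calibration_represents_general X hXconv r htrans hbet xstar xlow hxstar hxlow hstrict U hU
end

section
/- Let ≿ be a complete transitive continuous betweenness relation on compact convex X with x* ≻ x_*, and fix t ∈ (0,1). For x ∈ X, the value v_t^P(x) of any separating affine functional (normalized by v_t^P(x*)=1, v_t^P(x_*)=0) on the affine hull of a polytope P containing {x*, x_*, x} does not depend on the choice of P. That is, if P and Q are two such polytopes with normalized separating functionals v_t^P and v_t^Q, then v_t^P(x) = v_t^Q(x). -/
/-!
Along any segment from `x` to an endpoint `c ∈ {x*, x_*}` lying on the other side of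
`m_t = t x* + (1 - t) x_*`, completeness and closed contour sets give, by connectedness, a point
`z` indifferent to `m_t`. Every normalized separating functional takes the value `t` at `z` and
the value `0` or `1` at `c`; since it is affine on the segment, this pins down its value at `x`.
-/

open Set

def IsSeparatingAt {α β : Type*} [LinearOrder β] (r : α → α → Prop) (P : Set α) (m : α)
    (v : α → β) : Prop :=
  ∀ y ∈ P, (r y m ↔ v y ≥ v m) ∧ ((r y m ∧ ¬ r m y) ↔ v y > v m)

namespace IsSeparatingAt

variable {α β : Type*} [LinearOrder β] {r : α → α → Prop} {P : Set α} {m y : α} {v : α → β}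

lemma rel_of_le (hv : IsSeparatingAt r P m v) (hy : y ∈ P) (hle : v m ≤ v y) : r y m :=
  (hv y hy).1.2 hle

lemma not_rel_of_lt (hv : IsSeparatingAt r P m v) (hy : y ∈ P) (hlt : v y < v m) : ¬ r y m :=
  fun h => (hv y hy).1.1 h |>.not_gt hlt

lemma eq_of_indifferent (hv : IsSeparatingAt r P m v) (hy : y ∈ P) (hym : r y m)
    (hmy : r m y) : v y = v m :=
  le_antisymm (not_lt.1 fun hlt => ((hv y hy).2.2 hlt).2 hmy) ((hv y hy).1.1 hym)

end IsSeparatingAt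

lemma IsPreconnected.exists_indifferent {α : Type*} [TopologicalSpace α] {X s : Set α}
    {r : α → α → Prop} {m a b : α} (hs : IsPreconnected s) (hsX : s ⊆ X)
    (hcomp : ∀ y ∈ s, r y m ∨ r m y) (hup : IsClosed {y ∈ X | r y m})
    (hlow : IsClosed {y ∈ X | r m y}) (ha : a ∈ s) (hb : b ∈ s) (ham : r a m) (hmb : r m b) :
    ∃ z ∈ s, r z m ∧ r m z := by
  have hcover : s ⊆ {y ∈ X | r y m} ∪ {y ∈ X | r m y} := fun y hy =>
    (hcomp y hy).imp (fun h => ⟨hsX hy, h⟩) (fun h => ⟨hsX hy, h⟩)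
  obtain ⟨z, hz, ⟨-, hzm⟩, ⟨-, hmz⟩⟩ := isPreconnected_closed_iff.1 hs _ _ hup hlow hcover
    ⟨a, ha, hsX ha, ham⟩ ⟨b, hb, hsX hb, hmb⟩
  exact ⟨z, hz, hzm, hmz⟩

lemma exists_indifferent_mem_segment {E : Type*} [AddCommGroup E] [Module ℝ E]
    [TopologicalSpace E] [ContinuousAdd E] [ContinuousSMul ℝ E] {X : Set E}
    {r : E → E → Prop} {m a b : E} (hcomp : ∀ y ∈ X, r y m ∨ r m y)
    (hup : IsClosed {y ∈ X | r y m}) (hlow : IsClosed {y ∈ X | r m y})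
    (hab : segment ℝ a b ⊆ X) (ham : r a m) (hmb : r m b) :
    ∃ z ∈ segment ℝ a b, r z m ∧ r m z :=
  (convex_segment a b).isPreconnected.exists_indifferent hab (fun y hy => hcomp y (hab hy))
    hup hlow (left_mem_segment ℝ a b) (right_mem_segment ℝ a b) ham hmb

lemma AffineMap.eq_of_eq_lineMap {k V P : Type*} [Field k] [AddCommGroup V] [Module k V]
    [AddTorsor V P] (v w : P →ᵃ[k] k) {c x : P} {μ : k} (hμ : μ ≠ 0) (hc : v c = w c)
    (hz : v (lineMap c x μ) = w (lineMap c x μ)) : v x = w x := by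
  rw [v.apply_lineMap, w.apply_lineMap, AffineMap.lineMap_apply_ring',
    AffineMap.lineMap_apply_ring', hc] at hz
  have := mul_left_cancel₀ hμ (add_right_cancel hz)
  linear_combination this

lemma AffineMap.eq_of_eq_on_segment {E : Type*} [AddCommGroup E] [Module ℝ E]
    (v w : E →ᵃ[ℝ] ℝ) {c x z : E} (hz : z ∈ segment ℝ c x) (hc : v c = w c)
    (hzeq : v z = w z) (hne : v z ≠ v c) : v x = w x := by
  obtain ⟨μ, -, rfl⟩ := (segment_eq_image_lineMap ℝ c x).subset hz
  refine v.eq_of_eq_lineMap w (fun hμ => hne ?_) hc hzeq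
  rw [hμ, AffineMap.lineMap_apply_zero]

theorem local_utility_independent_of_polytope_general
    {E : Type*} [AddCommGroup E] [Module ℝ E] [TopologicalSpace E]
    [IsTopologicalAddGroup E] [ContinuousSMul ℝ E]
    (X : Set E)
    (r : E → E → Prop)
    (hcomp : ∀ x ∈ X, ∀ y ∈ X, r x y ∨ r y x)
    (hclosed : ∀ y ∈ X, IsClosed {x ∈ X | r x y} ∧ IsClosed {x ∈ X | r y x})
    (xstar xlow : E)
    (t : ℝ) (ht : t ∈ Ioo (0:ℝ) 1) (x : E)
    (sP sQ : Finset E) (P Q : Set E)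
    (hP : P = convexHull ℝ (sP : Set E)) (hQ : Q = convexHull ℝ (sQ : Set E))
    (hPX : P ⊆ X)
    (hxstarP : xstar ∈ P) (hxlowP : xlow ∈ P) (hxP : x ∈ P)
    (hxstarQ : xstar ∈ Q) (hxlowQ : xlow ∈ Q) (hxQ : x ∈ Q)
    (v w : E →ᵃ[ℝ] ℝ)
    (hv1 : v xstar = 1) (hv0 : v xlow = 0)
    (hw1 : w xstar = 1) (hw0 : w xlow = 0)
    (hvrep : ∀ y ∈ P,
      (r y (t • xstar + (1 - t) • xlow) ↔ v y ≥ v (t • xstar + (1 - t) • xlow)) ∧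
      ((r y (t • xstar + (1 - t) • xlow) ∧ ¬ r (t • xstar + (1 - t) • xlow) y) ↔
        v y > v (t • xstar + (1 - t) • xlow)))
    (hwrep : ∀ y ∈ Q,
      (r y (t • xstar + (1 - t) • xlow) ↔ w y ≥ w (t • xstar + (1 - t) • xlow)) ∧
      ((r y (t • xstar + (1 - t) • xlow) ∧ ¬ r (t • xstar + (1 - t) • xlow) y) ↔
        w y > w (t • xstar + (1 - t) • xlow))) :
    v x = w x := by
  set m : E := t • xstar + (1 - t) • xlow
  have hPconv : Convex ℝ P := hP ▸ convex_convexHull ℝ _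
  have hQconv : Convex ℝ Q := hQ ▸ convex_convexHull ℝ _
  have hmP : m ∈ P := hPconv hxstarP hxlowP ht.1.le (by linarith [ht.2]) (by ring)
  have hvm : v m = t := by simp [m, Convex.combo_affine_apply (add_sub_cancel t 1), hv1, hv0]
  have hwm : w m = t := by simp [m, Convex.combo_affine_apply (add_sub_cancel t 1), hw1, hw0]
  have hv : IsSeparatingAt r P m v := hvrep
  have hw : IsSeparatingAt r Q m w := hwrep
  obtain ⟨c, hcP, hcQ, hc, hct, z, hz, hzm, hmz⟩ : ∃ c ∈ P, c ∈ Q ∧ v c = w c ∧ v c ≠ t ∧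
      ∃ z ∈ segment ℝ c x, r z m ∧ r m z := by
    have hmX : m ∈ X := hPX hmP
    have hcomp_m : ∀ y ∈ X, r y m ∨ r m y := fun y hy => hcomp y hy m hmX
    have hind : ∀ a ∈ P, ∀ b ∈ P, r a m → r m b → ∃ z ∈ segment ℝ a b, r z m ∧ r m z :=
      fun a ha b hb => exists_indifferent_mem_segment hcomp_m (hclosed m hmX).1
        (hclosed m hmX).2 ((hPconv.segment_subset ha hb).trans hPX)
    rcases hcomp_m x (hPX hxP) with hxm | hmx
    · have hmlow : r m xlow := (hcomp_m xlow (hPX hxlowP)).resolve_left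
        (hv.not_rel_of_lt hxlowP (by rw [hv0, hvm]; exact ht.1))
      refine ⟨xlow, hxlowP, hxlowQ, hv0.trans hw0.symm, by rw [hv0]; exact ht.1.ne, ?_⟩
      simpa only [segment_symm] using hind x hxP xlow hxlowP hxm hmlow
    · have hstarm : r xstar m := hv.rel_of_le hxstarP (by rw [hv1, hvm]; exact ht.2.le)
      exact ⟨xstar, hxstarP, hxstarQ, hv1.trans hw1.symm, by rw [hv1]; exact ht.2.ne',
        hind xstar hxstarP x hxP hstarm hmx⟩
  have hzP : z ∈ P := hPconv.segment_subset hcP hxP hz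
  have hzQ : z ∈ Q := hQconv.segment_subset hcQ hxQ hz
  have hvz : v z = t := (hv.eq_of_indifferent hzP hzm hmz).trans hvm
  have hwz : w z = t := (hw.eq_of_indifferent hzQ hzm hmz).trans hwm
  exact v.eq_of_eq_on_segment w hz hc (hvz.trans hwz.symm) (hvz ▸ hct.symm)

theorem local_utility_independent_of_polytope
    {E : Type*} [AddCommGroup E] [Module ℝ E] [TopologicalSpace E]
    [IsTopologicalAddGroup E] [ContinuousSMul ℝ E] [T2Space E]
    (X : Set E) (hXconv : Convex ℝ X) (hXcomp : IsCompact X)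
    (r : E → E → Prop)
    (hcomp : ∀ x ∈ X, ∀ y ∈ X, r x y ∨ r y x)
    (htrans : ∀ x ∈ X, ∀ y ∈ X, ∀ z ∈ X, r x y → r y z → r x z)
    (hclosed : ∀ y ∈ X, IsClosed {x ∈ X | r x y} ∧ IsClosed {x ∈ X | r y x})
    (hbet : ∀ x ∈ X, ∀ y ∈ X, ∀ l ∈ Ioo (0:ℝ) 1,
      (r x y ∧ ¬ r y x) →
        ((r x (l • x + (1 - l) • y) ∧ ¬ r (l • x + (1 - l) • y) x) ∧
         (r (l • x + (1 - l) • y) y ∧ ¬ r y (l • x + (1 - l) • y))))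
    (xstar xlow : E) (hxstar : xstar ∈ X) (hxlow : xlow ∈ X)
    (hbest : ∀ x ∈ X, r xstar x) (hworst : ∀ x ∈ X, r x xlow)
    (hstrict : r xstar xlow ∧ ¬ r xlow xstar)
    (t : ℝ) (ht : t ∈ Ioo (0:ℝ) 1) (x : E) (hx : x ∈ X)
    (sP sQ : Finset E) (P Q : Set E)
    (hP : P = convexHull ℝ (sP : Set E)) (hQ : Q = convexHull ℝ (sQ : Set E))
    (hPX : P ⊆ X) (hQX : Q ⊆ X)
    (hxstarP : xstar ∈ P) (hxlowP : xlow ∈ P) (hxP : x ∈ P)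
    (hxstarQ : xstar ∈ Q) (hxlowQ : xlow ∈ Q) (hxQ : x ∈ Q)
    (v w : E →ᵃ[ℝ] ℝ)
    (hv1 : v xstar = 1) (hv0 : v xlow = 0)
    (hw1 : w xstar = 1) (hw0 : w xlow = 0)
    (hvrep : ∀ y ∈ P,
      (r y (t • xstar + (1 - t) • xlow) ↔ v y ≥ v (t • xstar + (1 - t) • xlow)) ∧
      ((r y (t • xstar + (1 - t) • xlow) ∧ ¬ r (t • xstar + (1 - t) • xlow) y) ↔
        v y > v (t • xstar + (1 - t) • xlow)))
    (hwrep : ∀ y ∈ Q,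
      (r y (t • xstar + (1 - t) • xlow) ↔ w y ≥ w (t • xstar + (1 - t) • xlow)) ∧
      ((r y (t • xstar + (1 - t) • xlow) ∧ ¬ r (t • xstar + (1 - t) • xlow) y) ↔
        w y > w (t • xstar + (1 - t) • xlow))) :
    v x = w x :=
  local_utility_independent_of_polytope_general X r hcomp hclosed xstar xlow t ht x sP sQ P Q hP hQ
    hPX hxstarP hxlowP hxP hxstarQ hxlowQ hxQ v w hv1 hv0 hw1 hw0 hvrep hwrep
end

section
/- Let ≿ be a complete transitive continuous betweenness relation on compact convex X with x* ≻ x_*. For each (x,t) ∈ X × (0,1) define ξ_t(x) = x_* if x ≿ m_t and ξ_t(x) = x* otherwise. Then there exists a unique μ(x,t) ∈ (0,1] such that m_t ∼ μ(x,t) x + (1 − μ(x,t)) ξ_t(x). -/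
/-!
Along the segment `μ ↦ μ • x + (1 - μ) • b` from the endpoint `b = ξ_t(x)` to `x`, the point `m_t`
has `b` strictly on one side and `x` weakly on the other. The two closed sets of parameters at
which the segment lies above, resp. below, `m_t` cover the connected interval `[0, 1]` and are both
nonempty, so they meet; the meeting point is not `0` because `b ≁ m_t`. Two distinct such
parameters `μ < ν` would make the point at `μ` lie strictly between the point at `ν` and `b`, which
are not indifferent, so betweenness forbids it from being indifferent to the point at `ν`.
-/

open Set

section Intermediate

variable {α E : Type*} [TopologicalSpace α] [TopologicalSpace E] {X : Set E} {r : E → E → Prop}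

theorem exists_indiff_of_isPreconnected {m : E} (hcomp : ∀ y ∈ X, r m y ∨ r y m)
    (hlower : IsClosed {x ∈ X | r x m}) (hupper : IsClosed {x ∈ X | r m x})
    {S : Set α} (hS : IsPreconnected S) {γ : α → E} (hγ : Continuous γ) (hγS : MapsTo γ S X)
    (hup : ∃ a ∈ S, r m (γ a)) (hdown : ∃ a ∈ S, r (γ a) m) :
    ∃ c ∈ S, r m (γ c) ∧ r (γ c) m := by
  obtain ⟨a, haS, ha⟩ := hup
  obtain ⟨a', haS', ha'⟩ := hdown
  obtain ⟨c, hcS, ⟨-, hmc⟩, -, hcm⟩ :=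
    isPreconnected_closed_iff.mp hS _ _ (hupper.preimage hγ) (hlower.preimage hγ)
      (fun c hc => (hcomp _ (hγS hc)).imp (⟨hγS hc, ·⟩) (⟨hγS hc, ·⟩))
      ⟨a, haS, hγS haS, ha⟩ ⟨a', haS', hγS haS', ha'⟩
  exact ⟨c, hcS, hmc, hcm⟩

end Intermediate

section Segment

variable {E : Type*} [AddCommGroup E] [Module ℝ E] {X : Set E} {r : E → E → Prop}

theorem not_indiff_combo_of_not_indiff
    (hcomp : ∀ x ∈ X, ∀ y ∈ X, r x y ∨ r y x)
    (hbet : ∀ x ∈ X, ∀ y ∈ X, ∀ l ∈ Ioo (0:ℝ) 1,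
      (r x y ∧ ¬ r y x) →
        ((r x (l • x + (1 - l) • y) ∧ ¬ r (l • x + (1 - l) • y) x) ∧
         (r (l • x + (1 - l) • y) y ∧ ¬ r y (l • x + (1 - l) • y))))
    {y b : E} (hy : y ∈ X) (hb : b ∈ X) (hyb : ¬ (r y b ∧ r b y)) {l : ℝ} (hl : l ∈ Ioo (0:ℝ) 1) :
    ¬ (r y (l • y + (1 - l) • b) ∧ r (l • y + (1 - l) • b) y) := by
  rintro ⟨hyz, hzy⟩
  rcases hcomp y hy b hb with hyb' | hby
  · exact (hbet y hy b hb l hl ⟨hyb', fun h => hyb ⟨hyb', h⟩⟩).1.2 hzy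
  · have hl' : 1 - l ∈ Ioo (0:ℝ) 1 := ⟨by linarith [hl.2], by linarith [hl.1]⟩
    have h := (hbet b hb y hy (1 - l) hl' ⟨hby, fun h => hyb ⟨h, hby⟩⟩).2.2
    rw [show (1 - l) • b + (1 - (1 - l)) • y = l • y + (1 - l) • b by module] at h
    exact h hyz

theorem eq_of_indiff_segment (hX : Convex ℝ X)
    (hcomp : ∀ x ∈ X, ∀ y ∈ X, r x y ∨ r y x)
    (htrans : ∀ x ∈ X, ∀ y ∈ X, ∀ z ∈ X, r x y → r y z → r x z)
    (hbet : ∀ x ∈ X, ∀ y ∈ X, ∀ l ∈ Ioo (0:ℝ) 1,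
      (r x y ∧ ¬ r y x) →
        ((r x (l • x + (1 - l) • y) ∧ ¬ r (l • x + (1 - l) • y) x) ∧
         (r (l • x + (1 - l) • y) y ∧ ¬ r y (l • x + (1 - l) • y))))
    {b y m : E} (hb : b ∈ X) (hy : y ∈ X) (hm : m ∈ X) (hmb : ¬ (r m b ∧ r b m))
    {μ ν : ℝ} (hμ : μ ∈ Ioc (0:ℝ) 1) (hν : ν ∈ Ioc (0:ℝ) 1)
    (hμm : r m (μ • y + (1 - μ) • b) ∧ r (μ • y + (1 - μ) • b) m)
    (hνm : r m (ν • y + (1 - ν) • b) ∧ r (ν • y + (1 - ν) • b) m) :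
    μ = ν := by
  by_contra hne
  wlog hlt : μ < ν generalizing μ ν
  · exact this hν hμ hνm hμm (Ne.symm hne) ((Ne.symm hne).lt_of_le (not_lt.mp hlt))
  set z := ν • y + (1 - ν) • b
  have hzX : z ∈ X := hX hy hb hν.1.le (sub_nonneg.2 hν.2) (by ring)
  have hμX : μ • y + (1 - μ) • b ∈ X := hX hy hb hμ.1.le (sub_nonneg.2 hμ.2) (by ring)
  set l := μ / ν
  have hl : l ∈ Ioo (0:ℝ) 1 := ⟨div_pos hμ.1 hν.1, (div_lt_one hν.1).mpr hlt⟩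
  have hlν : l * ν = μ := div_mul_cancel₀ μ hν.1.ne'
  have hcombo : l • z + (1 - l) • b = μ • y + (1 - μ) • b := by
    rw [← hlν]; module
  have hzb : ¬ (r z b ∧ r b z) := fun ⟨hzb, hbz⟩ =>
    hmb ⟨htrans _ hm _ hzX _ hb hνm.1 hzb, htrans _ hb _ hzX _ hm hbz hνm.2⟩
  refine not_indiff_combo_of_not_indiff hcomp hbet hzX hb hzb hl ?_
  rw [hcombo]
  exact ⟨htrans _ hzX _ hm _ hμX hνm.2 hμm.1, htrans _ hμX _ hm _ hzX hμm.2 hνm.1⟩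

theorem existsUnique_indiff_segment [TopologicalSpace E] [ContinuousAdd E] [ContinuousSMul ℝ E]
    (hX : Convex ℝ X)
    (hcomp : ∀ x ∈ X, ∀ y ∈ X, r x y ∨ r y x)
    (htrans : ∀ x ∈ X, ∀ y ∈ X, ∀ z ∈ X, r x y → r y z → r x z)
    (hclosed : ∀ y ∈ X, IsClosed {x ∈ X | r x y} ∧ IsClosed {x ∈ X | r y x})
    (hbet : ∀ x ∈ X, ∀ y ∈ X, ∀ l ∈ Ioo (0:ℝ) 1,
      (r x y ∧ ¬ r y x) →
        ((r x (l • x + (1 - l) • y) ∧ ¬ r (l • x + (1 - l) • y) x) ∧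
         (r (l • x + (1 - l) • y) y ∧ ¬ r y (l • x + (1 - l) • y))))
    {b y m : E} (hb : b ∈ X) (hy : y ∈ X) (hm : m ∈ X)
    (hside : (¬ r b m ∧ r y m) ∨ (¬ r m b ∧ r m y)) :
    ∃! μ : ℝ, μ ∈ Ioc (0:ℝ) 1 ∧
      (r m (μ • y + (1 - μ) • b) ∧ r (μ • y + (1 - μ) • b) m) := by
  have hmb : ¬ (r m b ∧ r b m) := by tauto
  have hmaps : MapsTo (fun μ : ℝ => μ • y + (1 - μ) • b) (Icc 0 1) X :=
    fun μ hμ => hX hy hb hμ.1 (sub_nonneg.2 hμ.2) (by ring)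
  have h0 : (0:ℝ) ∈ Icc (0:ℝ) 1 := left_mem_Icc.2 zero_le_one
  have h1 : (1:ℝ) ∈ Icc (0:ℝ) 1 := right_mem_Icc.2 zero_le_one
  obtain ⟨μ, hμ, hμm⟩ := exists_indiff_of_isPreconnected (hcomp m hm) (hclosed m hm).1
    (hclosed m hm).2 isPreconnected_Icc (by fun_prop) hmaps
    (by rcases hside with ⟨hbm, -⟩ | ⟨-, hmy⟩
        · exact ⟨0, h0, by simpa using (hcomp b hb m hm).resolve_left hbm⟩
        · exact ⟨1, h1, by simpa using hmy⟩)
    (by rcases hside with ⟨-, hym⟩ | ⟨hmb', -⟩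
        · exact ⟨1, h1, by simpa using hym⟩
        · exact ⟨0, h0, by simpa using (hcomp m hm b hb).resolve_left hmb'⟩)
  have hμ' : μ ∈ Ioc (0:ℝ) 1 := by
    refine ⟨hμ.1.lt_of_ne' ?_, hμ.2⟩
    rintro rfl
    exact hmb (by simpa using hμm)
  exact ⟨μ, ⟨hμ', hμm⟩, fun ν ⟨hν, hνm⟩ =>
    eq_of_indiff_segment hX hcomp htrans hbet hb hy hm hmb hν hμ' hνm hμm⟩

end Segment

theorem calibration_weight_exists_unique_general
    {E : Type*} [AddCommGroup E] [Module ℝ E] [TopologicalSpace E]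
    [IsTopologicalAddGroup E] [ContinuousSMul ℝ E]
    (X : Set E) (hXconv : Convex ℝ X)
    (r : E → E → Prop)
    (hcomp : ∀ x ∈ X, ∀ y ∈ X, r x y ∨ r y x)
    (htrans : ∀ x ∈ X, ∀ y ∈ X, ∀ z ∈ X, r x y → r y z → r x z)
    (hclosed : ∀ y ∈ X, IsClosed {x ∈ X | r x y} ∧ IsClosed {x ∈ X | r y x})
    (hbet : ∀ x ∈ X, ∀ y ∈ X, ∀ l ∈ Ioo (0:ℝ) 1,
      (r x y ∧ ¬ r y x) →
        ((r x (l • x + (1 - l) • y) ∧ ¬ r (l • x + (1 - l) • y) x) ∧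
         (r (l • x + (1 - l) • y) y ∧ ¬ r y (l • x + (1 - l) • y))))
    (xstar xlow : E) (hxstar : xstar ∈ X) (hxlow : xlow ∈ X)
    (hstrict : r xstar xlow ∧ ¬ r xlow xstar)
    (t : ℝ) (ht : t ∈ Ioo (0:ℝ) 1) (x : E) (hx : x ∈ X) :
    (r x (t • xstar + (1 - t) • xlow) →
      ∃! mu : ℝ, mu ∈ Ioc (0:ℝ) 1 ∧
        (r (t • xstar + (1 - t) • xlow) (mu • x + (1 - mu) • xlow) ∧
         r (mu • x + (1 - mu) • xlow) (t • xstar + (1 - t) • xlow))) ∧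
    (¬ r x (t • xstar + (1 - t) • xlow) →
      ∃! mu : ℝ, mu ∈ Ioc (0:ℝ) 1 ∧
        (r (t • xstar + (1 - t) • xlow) (mu • x + (1 - mu) • xstar) ∧
         r (mu • x + (1 - mu) • xstar) (t • xstar + (1 - t) • xlow))) := by
  have hm : t • xstar + (1 - t) • xlow ∈ X :=
    hXconv hxstar hxlow ht.1.le (sub_nonneg.2 ht.2.le) (by ring)
  obtain ⟨⟨-, hm_star⟩, -, hlow_m⟩ := hbet xstar hxstar xlow hxlow t ht hstrict
  refine ⟨fun hxm => ?_, fun hxm => ?_⟩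
  · exact existsUnique_indiff_segment hXconv hcomp htrans hclosed hbet hxlow hx hm
      (.inl ⟨hlow_m, hxm⟩)
  · exact existsUnique_indiff_segment hXconv hcomp htrans hclosed hbet hxstar hx hm
      (.inr ⟨hm_star, (hcomp x hx _ hm).resolve_left hxm⟩)

theorem calibration_weight_exists_unique
    {E : Type*} [AddCommGroup E] [Module ℝ E] [TopologicalSpace E]
    [IsTopologicalAddGroup E] [ContinuousSMul ℝ E] [T2Space E]
    (X : Set E) (hXconv : Convex ℝ X) (hXcomp : IsCompact X)
    (r : E → E → Prop)
    (hcomp : ∀ x ∈ X, ∀ y ∈ X, r x y ∨ r y x)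
    (htrans : ∀ x ∈ X, ∀ y ∈ X, ∀ z ∈ X, r x y → r y z → r x z)
    (hclosed : ∀ y ∈ X, IsClosed {x ∈ X | r x y} ∧ IsClosed {x ∈ X | r y x})
    (hbet : ∀ x ∈ X, ∀ y ∈ X, ∀ l ∈ Ioo (0:ℝ) 1,
      (r x y ∧ ¬ r y x) →
        ((r x (l • x + (1 - l) • y) ∧ ¬ r (l • x + (1 - l) • y) x) ∧
         (r (l • x + (1 - l) • y) y ∧ ¬ r y (l • x + (1 - l) • y))))
    (xstar xlow : E) (hxstar : xstar ∈ X) (hxlow : xlow ∈ X)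
    (hbest : ∀ x ∈ X, r xstar x) (hworst : ∀ x ∈ X, r x xlow)
    (hstrict : r xstar xlow ∧ ¬ r xlow xstar)
    (t : ℝ) (ht : t ∈ Ioo (0:ℝ) 1) (x : E) (hx : x ∈ X) :
    (r x (t • xstar + (1 - t) • xlow) →
      ∃! mu : ℝ, mu ∈ Ioc (0:ℝ) 1 ∧
        (r (t • xstar + (1 - t) • xlow) (mu • x + (1 - mu) • xlow) ∧
         r (mu • x + (1 - mu) • xlow) (t • xstar + (1 - t) • xlow))) ∧
    (¬ r x (t • xstar + (1 - t) • xlow) →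
      ∃! mu : ℝ, mu ∈ Ioc (0:ℝ) 1 ∧
        (r (t • xstar + (1 - t) • xlow) (mu • x + (1 - mu) • xstar) ∧
         r (mu • x + (1 - mu) • xstar) (t • xstar + (1 - t) • xlow))) :=
  calibration_weight_exists_unique_general X hXconv r hcomp htrans hclosed hbet xstar xlow hxstar
    hxlow hstrict t ht x hx
end
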